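/- Let $n \ge 1$ and let $C$ be the Cartan matrix of type $A_n$. For any $Z \in \mathbb{C}^n$, $\sum_{i,j=1}^n (C^{-1})_{ij} Z_i \overline{Z_j} \ge \frac{1}{n+1} \sum_{i=1}^n |Z_i|^2$, where the left-hand side is real. -/

import Mathlib

/-!
The inverse of `cartanA n` is the Green's function `G i j = min i j - i j / (n + 1)` of the
discrete Laplacian on a path with Dirichlet boundary, as one checks column by column.
Moreover `(n + 1) G i j = min i j * (n + 1 - max i j)` is the number of intervals
`[k, l] ⊆ [1, n]` containing both `i` and `j`, so `(n + 1) ∑ G i j Z i (conj Z j)` equals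
`∑_{k ≤ l} |Z k + ⋯ + Z l|²`: a real number bounded below by its terms with `k = l`.
-/

open Matrix Finset

/-- The Cartan matrix of type `Aₙ`, over the complex numbers. -/
def cartanA (n : ℕ) : Matrix (Fin n) (Fin n) ℂ :=
  Matrix.of fun i j =>
    if i = j then 2 else if i.val + 1 = j.val ∨ j.val + 1 = i.val then -1 else 0

open ComplexConjugate

lemma sum_fin_ite_succ_eq {n m : ℕ} (f : ℕ → ℂ) (h₀ : f 0 = 0) (hm : n < m → f m = 0) :
    ∑ k : Fin n, (if (k : ℕ) + 1 = m then f (k + 1) else 0) = f m := by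
  have h := sum_range_succ' (fun k => if k = m then f k else 0) n
  simp only [sum_ite_eq', mem_range, h₀, ite_self, add_zero] at h
  rw [Fin.sum_univ_eq_sum_range (fun k => if k + 1 = m then f (k + 1) else 0), ← h]
  split_ifs with hmn
  · rfl
  · exact (hm (by omega)).symm

lemma sum_cartanA_mul {n : ℕ} (f : ℕ → ℂ) (h₀ : f 0 = 0) (hn : f (n + 1) = 0)
    (i : Fin n) :
    ∑ k : Fin n, cartanA n i k * f (k + 1) = 2 * f (i + 1) - f i - f (i + 2) := by
  have hsplit : ∀ k : Fin n, cartanA n i k * f (k + 1) =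
      (if (k : ℕ) + 1 = i + 1 then 2 * f (k + 1) else 0)
      - (if (k : ℕ) + 1 = i then f (k + 1) else 0)
      - (if (k : ℕ) + 1 = i + 2 then f (k + 1) else 0) := by
    intro k
    simp only [cartanA, of_apply, Fin.ext_iff]
    split_ifs <;> first | omega | ring
  have hi := i.isLt
  simp only [hsplit, sum_sub_distrib]
  rw [sum_fin_ite_succ_eq (fun a => 2 * f a) (by simp [h₀]) (by omega),
    sum_fin_ite_succ_eq f h₀ (by omega),
    sum_fin_ite_succ_eq f h₀ (fun h => by rwa [show (i : ℕ) + 2 = n + 1 by omega])]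

noncomputable def pathGreen (n a b : ℕ) : ℂ := (min a b : ℕ) - (a * b : ℂ) / (n + 1)

lemma pathGreen_zero_left (n b : ℕ) : pathGreen n 0 b = 0 := by simp [pathGreen]

lemma pathGreen_succ_left {n b : ℕ} (h : b ≤ n + 1) : pathGreen n (n + 1) b = 0 := by
  have : ((n : ℂ) + 1) ≠ 0 := Nat.cast_add_one_ne_zero n
  simp only [pathGreen, min_eq_right h]
  field_simp
  push_cast
  ring

lemma two_mul_pathGreen_sub (n a b : ℕ) :
    2 * pathGreen n (a + 1) b - pathGreen n a b - pathGreen n (a + 2) b =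
      if a + 1 = b then 1 else 0 := by
  have : ((n : ℂ) + 1) ≠ 0 := Nat.cast_add_one_ne_zero n
  simp only [pathGreen]
  split_ifs with h
  · rw [min_eq_left (by omega), min_eq_left (by omega), min_eq_right (by omega)]
    subst h; field_simp; push_cast; ring
  rcases lt_or_gt_of_ne h with h | h
  · rw [min_eq_left (by omega), min_eq_left (by omega), min_eq_left (by omega)]
    field_simp; push_cast; ring
  · rw [min_eq_right (by omega), min_eq_right (by omega), min_eq_right (by omega)]
    field_simp; push_cast; ring

noncomputable def cartanAInv (n : ℕ) : Matrix (Fin n) (Fin n) ℂ :=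
  Matrix.of fun i j => pathGreen n (i + 1) (j + 1)

lemma cartanA_mul_cartanAInv (n : ℕ) : cartanA n * cartanAInv n = 1 := by
  ext i j
  have hj := j.isLt
  rw [mul_apply]
  simp only [cartanAInv, of_apply]
  rw [sum_cartanA_mul (pathGreen n · (j + 1)) (pathGreen_zero_left n _)
    (pathGreen_succ_left (by omega)), two_mul_pathGreen_sub, one_apply]
  simp [Fin.ext_iff]

lemma inv_cartanA (n : ℕ) : (cartanA n)⁻¹ = cartanAInv n :=
  inv_eq_right_inv (cartanA_mul_cartanAInv n)

lemma sum_sum_card_mem_mul_mul_conj {ι κ : Type*} [Fintype ι] [Fintype κ]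
    (S : κ → Finset ι) [∀ k, DecidablePred (· ∈ S k)] (Z : ι → ℂ) :
    ∑ i, ∑ j, (#{k | i ∈ S k ∧ j ∈ S k} : ℂ) * Z i * conj (Z j) =
      ∑ k, (Complex.normSq (∑ i ∈ S k, Z i) : ℂ) := by
  calc ∑ i, ∑ j, (#{k | i ∈ S k ∧ j ∈ S k} : ℂ) * Z i * conj (Z j)
      = ∑ i, ∑ j, ∑ k, if i ∈ S k ∧ j ∈ S k then Z i * conj (Z j) else 0 := by
        simp_rw [natCast_card_filter, sum_mul, ite_mul, one_mul, zero_mul]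
    _ = ∑ k, ∑ i, ∑ j, if i ∈ S k ∧ j ∈ S k then Z i * conj (Z j) else 0 :=
        (sum_congr rfl fun _ _ => sum_comm).trans sum_comm
    _ = ∑ k, (Complex.normSq (∑ i ∈ S k, Z i) : ℂ) := by
        simp_rw [← Complex.mul_conj, map_sum, sum_mul_sum, ← sum_ite_mem_eq (S _), ite_and,
          ite_sum_zero]

lemma natCast_add_one_mul_cartanAInv_apply {n : ℕ} (i j : Fin n) :
    ((n : ℂ) + 1) * cartanAInv n i j =
      #{p : Fin n × Fin n | i ∈ Icc p.1 p.2 ∧ j ∈ Icc p.1 p.2} := by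
  have hfilter : ({p : Fin n × Fin n | i ∈ Icc p.1 p.2 ∧ j ∈ Icc p.1 p.2} : Finset _) =
      Iic (min i j) ×ˢ Ici (max i j) := by
    ext ⟨k, l⟩
    simp only [mem_filter, mem_univ, true_and, mem_Icc, mem_product, mem_Iic, mem_Ici,
      le_min_iff, max_le_iff]
    tauto
  have : ((n : ℂ) + 1) ≠ 0 := Nat.cast_add_one_ne_zero n
  have hi := i.isLt
  have hj := j.isLt
  rw [hfilter, card_product, Fin.card_Iic, Fin.card_Ici, Fin.coe_min, Fin.coe_max]
  simp only [cartanAInv, pathGreen, of_apply]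
  rcases le_total (i : ℕ) j with h | h
  · rw [min_eq_left h, max_eq_right h, min_eq_left (by omega), Nat.cast_mul, Nat.cast_sub hj.le]
    field_simp; push_cast; ring
  · rw [min_eq_right h, max_eq_left h, min_eq_right (by omega), Nat.cast_mul, Nat.cast_sub hi.le]
    field_simp; push_cast; ring

lemma natCast_add_one_mul_sum_cartanAInv (n : ℕ) (Z : Fin n → ℂ) :
    ((n : ℂ) + 1) * ∑ i, ∑ j, cartanAInv n i j * Z i * conj (Z j) =
      ∑ p : Fin n × Fin n, (Complex.normSq (∑ m ∈ Icc p.1 p.2, Z m) : ℂ) := by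
  calc ((n : ℂ) + 1) * ∑ i, ∑ j, cartanAInv n i j * Z i * conj (Z j)
      = ∑ i, ∑ j, (((n : ℂ) + 1) * cartanAInv n i j) * Z i * conj (Z j) := by
        simp only [mul_sum, mul_assoc]
    _ = ∑ p : Fin n × Fin n, (Complex.normSq (∑ m ∈ Icc p.1 p.2, Z m) : ℂ) := by
      simp only [natCast_add_one_mul_cartanAInv_apply]
      exact sum_sum_card_mem_mul_mul_conj (fun p : Fin n × Fin n => Icc p.1 p.2) Z

lemma sum_normSq_le_sum_normSq_sum_Icc {n : ℕ} (Z : Fin n → ℂ) :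
    ∑ i, Complex.normSq (Z i) ≤
      ∑ p : Fin n × Fin n, Complex.normSq (∑ m ∈ Icc p.1 p.2, Z m) := by
  rw [Fintype.sum_prod_type]
  refine sum_le_sum fun k _ => ?_
  simpa using single_le_sum (f := fun l => Complex.normSq (∑ m ∈ Icc k l, Z m))
    (fun _ _ => Complex.normSq_nonneg _) (mem_univ k)

theorem volume_typeA_ge_general (n : ℕ) (Z : Fin n → ℂ) :
    (∑ i : Fin n, ∑ j : Fin n,
        (cartanA n)⁻¹ i j * Z i * (starRingEnd ℂ) (Z j)).im = 0
    ∧ (1 / ((n : ℝ) + 1)) * ∑ i : Fin n, ‖Z i‖ ^ 2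
        ≤ (∑ i : Fin n, ∑ j : Fin n,
            (cartanA n)⁻¹ i j * Z i * (starRingEnd ℂ) (Z j)).re := by
  set T := ∑ p : Fin n × Fin n, Complex.normSq (∑ m ∈ Icc p.1 p.2, Z m)
  have hQ : ∑ i, ∑ j, (cartanA n)⁻¹ i j * Z i * conj (Z j) =
      ((T / ((n : ℝ) + 1) : ℝ) : ℂ) := by
    rw [inv_cartanA, eq_comm, ← mul_right_inj' (Nat.cast_add_one_ne_zero n (R := ℂ)),
      natCast_add_one_mul_sum_cartanAInv]
    push_cast [T]
    field_simp
  rw [hQ, Complex.ofReal_im, Complex.ofReal_re, one_div_mul_eq_div]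
  refine ⟨rfl, ?_⟩
  gcongr
  simpa only [Complex.sq_norm] using sum_normSq_le_sum_normSq_sum_Icc Z

theorem volume_typeA_ge (n : ℕ) (hn : 1 ≤ n) (Z : Fin n → ℂ) :
    (∑ i : Fin n, ∑ j : Fin n,
        (cartanA n)⁻¹ i j * Z i * (starRingEnd ℂ) (Z j)).im = 0
    ∧ (1 / ((n : ℝ) + 1)) * ∑ i : Fin n, ‖Z i‖ ^ 2
        ≤ (∑ i : Fin n, ∑ j : Fin n,
            (cartanA n)⁻¹ i j * Z i * (starRingEnd ℂ) (Z j)).re :=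
  volume_typeA_ge_general n Z
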